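/- Let T be a rooted tree and assign to each vertex v a rational function H(v,x) over ℤ by the recursion H(v,x) = x - d(v) - ∑_{w child of v} 1/H(w,x), where d(v) is the degree of v in T. Then the characteristic polynomial of the Laplacian matrix of T equals the product over all vertices v of H(v,x). -/

import Mathlib

open Polynomial

/-- A rooted tree on the vertex set `Fin (n+1)`, encoded by a parent function:
the root is `0`, and every non-root vertex has a parent strictly smaller than
itself (which guarantees acyclicity and connectedness). -/
structure ParentTree (n : ℕ) where
  parent : Fin (n + 1) → Fin (n + 1)
  parent_lt : ∀ i : Fin (n + 1), i ≠ 0 → parent i < i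
  parent_zero : parent 0 = 0

namespace ParentTree

variable {n : ℕ}

/-- The set of children of a vertex. -/
def children (T : ParentTree n) (v : Fin (n + 1)) : Finset (Fin (n + 1)) :=
  Finset.univ.filter fun w => T.parent w = v ∧ w ≠ v

/-- The adjacency matrix of a rooted tree, with entries in `R`. -/
def adjMat (T : ParentTree n) (R : Type) [Zero R] [One R] :
    Matrix (Fin (n + 1)) (Fin (n + 1)) R :=
  Matrix.of fun i j => if i ≠ j ∧ (T.parent i = j ∨ T.parent j = i) then 1 else 0

/-- The degree of a vertex. -/
def deg (T : ParentTree n) (v : Fin (n + 1)) : ℕ :=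
  (T.children v).card + if v = 0 then 0 else 1

end ParentTree

/-! The matrix `diagonal d + adjMat` of a rooted tree factors as `Pᵀ * diagonal H * P` with
`P = 1 + diagonal H⁻¹ * C`, where `C v w = 1` iff `w` is the parent of `v`. Since parents precede
children, `P` is unitriangular, so the determinant is `∏ v, H v`; and `Cᵀ * diagonal f * C` is
diagonal because every vertex has at most one parent, which is what makes the recursion for `H`
appear on the diagonal. For `d = X - deg` it remains to see that no `H v` vanishes: from the leaves
up, `H v` has valuation `exp 1` at infinity, because `X` dominates both the constant `deg v` and the
inverses `(H w)⁻¹`, which have valuation `exp (-1)`. -/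

namespace ParentTree

open Matrix

variable {n : ℕ} (T : ParentTree n)

lemma mem_children_iff {v w : Fin (n + 1)} : w ∈ T.children v ↔ T.parent w = v ∧ w ≠ v := by
  simp [children]

lemma lt_of_mem_children {v w : Fin (n + 1)} (h : w ∈ T.children v) : v < w := by
  obtain ⟨hwv, hne⟩ := T.mem_children_iff.mp h
  rcases eq_or_ne w 0 with rfl | hw0
  · exact absurd (hwv.symm.trans T.parent_zero) (Ne.symm hne)
  · exact hwv ▸ T.parent_lt w hw0

lemma eq_of_mem_children {u v w : Fin (n + 1)} (hu : w ∈ T.children u)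
    (hv : w ∈ T.children v) : u = v :=
  (T.mem_children_iff.mp hu).1.symm.trans (T.mem_children_iff.mp hv).1

lemma notMem_children_self (v : Fin (n + 1)) : v ∉ T.children v :=
  fun h => lt_irrefl v (T.lt_of_mem_children h)

def childMat (R : Type) [Zero R] [One R] : Matrix (Fin (n + 1)) (Fin (n + 1)) R :=
  Matrix.of fun v w => if v ∈ T.children w then 1 else 0

lemma adjMat_eq_childMat_add_transpose (R : Type) [AddZeroClass R] [One R] :
    T.adjMat R = T.childMat R + (T.childMat R)ᵀ := by
  ext v w
  have hasymm : ¬(v ∈ T.children w ∧ w ∈ T.children v) := fun ⟨hv, hw⟩ =>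
    lt_asymm (T.lt_of_mem_children hv) (T.lt_of_mem_children hw)
  simp only [adjMat, childMat, mem_children_iff, Matrix.add_apply, transpose_apply, of_apply]
    at hasymm ⊢
  split_ifs <;> simp_all

lemma adjMat_map {R S : Type} [NonAssocSemiring R] [NonAssocSemiring S] (f : R →+* S) :
    (T.adjMat R).map f = T.adjMat S := by
  ext v w
  simp [adjMat, apply_ite f]

lemma childMat_transpose_mul_diagonal_mul_childMat {R : Type} [NonAssocSemiring R]
    (f : Fin (n + 1) → R) :
    (T.childMat R)ᵀ * diagonal f * T.childMat R =
      diagonal fun v => ∑ w ∈ T.children v, f w := by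
  ext u v
  rw [mul_apply]
  simp only [mul_diagonal, transpose_apply, childMat, of_apply, ite_mul, one_mul, zero_mul,
    mul_ite, mul_one, mul_zero]
  rcases eq_or_ne u v with rfl | huv
  · simp [Finset.sum_ite_mem]
  · rw [diagonal_apply_ne _ huv]
    refine Finset.sum_eq_zero fun w _ => ?_
    grind [eq_of_mem_children]

lemma det_one_add_diagonal_mul_childMat {R : Type} [CommRing R] (g : Fin (n + 1) → R) :
    (1 + diagonal g * T.childMat R).det = 1 := by
  rw [det_of_isLowerTriangular]
  · simp [childMat, T.notMem_children_self]
  · intro v w (hvw : v < w)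
    have hvw' : v ∉ T.children w := fun h => lt_asymm hvw (T.lt_of_mem_children h)
    simp [childMat, hvw.ne, hvw']

theorem det_diagonal_add_adjMat {F : Type} [Field F] (d H : Fin (n + 1) → F)
    (hH0 : ∀ v, H v ≠ 0) (hH : ∀ v, H v = d v - ∑ w ∈ T.children v, (H w)⁻¹) :
    (diagonal d + T.adjMat F).det = ∏ v, H v := by
  set C := T.childMat F
  set P := 1 + diagonal H⁻¹ * C
  have hHH : diagonal H * diagonal H⁻¹ = 1 := by
    rw [diagonal_mul_diagonal, ← diagonal_one]
    exact congrArg diagonal (funext fun v => mul_inv_cancel₀ (hH0 v))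
  have hfactor : Pᵀ * diagonal H * P = diagonal d + T.adjMat F :=
    calc Pᵀ * diagonal H * P
        = diagonal H + (diagonal H * diagonal H⁻¹) * C + Cᵀ * (diagonal H⁻¹ * diagonal H)
          + Cᵀ * diagonal H⁻¹ * (diagonal H * diagonal H⁻¹) * C := by
          simp only [P, transpose_add, transpose_mul, transpose_one, diagonal_transpose]
          noncomm_ring
      _ = (diagonal H + Cᵀ * diagonal H⁻¹ * C) + (C + Cᵀ) := by
          rw [hHH, mul_eq_one_comm.mp hHH]
          noncomm_ring
      _ = diagonal d + T.adjMat F := by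
          rw [childMat_transpose_mul_diagonal_mul_childMat, diagonal_add,
            adjMat_eq_childMat_add_transpose]
          congr
          funext v
          simp [hH v]
  rw [← hfactor, det_mul, det_mul, det_transpose, det_one_add_diagonal_mul_childMat,
    det_diagonal]
  ring

open WithZero RatFunc in
lemma inftyValuation_eq_exp_one {K : Type*} [Field K] [DecidableEq (RatFunc K)]
    (c : Fin (n + 1) → K) (H : Fin (n + 1) → RatFunc K)
    (hH : ∀ v, H v = RatFunc.X - RatFunc.C (c v) - ∑ w ∈ T.children v, (H w)⁻¹)
    (v : Fin (n + 1)) : inftyValuation K (H v) = exp 1 := by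
  induction v using WellFoundedGT.induction with
  | _ v ih =>
  have hone : (1 : ℤᵐ⁰) < exp 1 := by
    rw [← WithZero.exp_zero, exp_lt_exp]
    norm_num
  have hchildren : inftyValuation K (∑ w ∈ T.children v, (H w)⁻¹) ≤ 1 :=
    Valuation.map_sum_le _ fun w hw => by
      rw [map_inv₀, ih w (T.lt_of_mem_children hw), ← WithZero.exp_neg, ← WithZero.exp_zero,
        exp_le_exp]
      norm_num
  have hconst : inftyValuation K (RatFunc.C (c v)) ≤ 1 := by
    rw [← algebraMap_eq_C]
    exact Valuation.IsTrivialOn.valuation_algebraMap_le_one _ _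
  have hlower : inftyValuation K (RatFunc.C (c v) + ∑ w ∈ T.children v, (H w)⁻¹) <
      inftyValuation K RatFunc.X := by
    rw [inftyValuation.X]
    exact (Valuation.map_add _ _ _).trans_lt
      (max_lt (hconst.trans_lt hone) (hchildren.trans_lt hone))
  rw [hH v, sub_sub, Valuation.map_sub_eq_of_lt_left _ hlower, inftyValuation.X]

end ParentTree

lemma Matrix.algebraMap_charpoly {ι K : Type*} [Fintype ι] [DecidableEq ι] [Field K]
    (M : Matrix ι ι K) :
    algebraMap K[X] (RatFunc K) M.charpoly =
      (scalar ι RatFunc.X - M.map (algebraMap K (RatFunc K))).det := by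
  rw [charpoly, RingHom.map_det, charmatrix, RingHom.map_sub]
  congr 2
  ext i j
  by_cases h : i = j <;> simp [h]

theorem stmt_5 {n : ℕ} (T : ParentTree n) (H : Fin (n + 1) → RatFunc ℚ)
    (hH : ∀ v, H v = RatFunc.X - (T.deg v : RatFunc ℚ) - ∑ w ∈ T.children v, (H w)⁻¹) :
    algebraMap (Polynomial ℚ) (RatFunc ℚ)
        (Matrix.diagonal (fun v => (T.deg v : ℚ)) - T.adjMat ℚ).charpoly
      = ∏ v, H v := by
  classical
  have hH' : ∀ v, H v = RatFunc.X - RatFunc.C (T.deg v : ℚ) - ∑ w ∈ T.children v, (H w)⁻¹ := by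
    simpa only [map_natCast] using hH
  have hH0 : ∀ v, H v ≠ 0 := fun v h => by
    have hval := T.inftyValuation_eq_exp_one _ H hH' v
    rw [h, map_zero] at hval
    exact WithZero.exp_ne_zero hval.symm
  rw [Matrix.algebraMap_charpoly, ← T.det_diagonal_add_adjMat _ H hH0 hH]
  congr 1
  rw [Matrix.map_sub _ (map_sub _), Matrix.diagonal_map (map_zero _), T.adjMat_map,
    Matrix.scalar_apply, sub_sub_eq_add_sub, add_sub_right_comm, Matrix.diagonal_sub]
  simp only [map_natCast]
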